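/- arXiv:2303.07850 — 2 statements merged into one kernel-verified Lean document; each statement's English description precedes it below -/
import Mathlib

section
/- Let a, b, c, d, ε be real numbers with d > c, 0 < ε < 1, and a − b = ε(d − c), and define player 1's expected stag-hunt payoff u(θ₁, θ₂) = a·θ₁θ₂ + c·θ₁(1−θ₂) + b·(1−θ₁)θ₂ + d·(1−θ₁)(1−θ₂). Then for (θ₁, θ₂) ∈ (0, 1) × (0, 1), the following equivalence holds: both policy-gradient directions point toward Stag, i.e., the derivative of θ ↦ u(θ, θ₂) is positive and the derivative of θ ↦ u(θ, θ₁) is positive, if and only if θ₁ > 1/(1 + ε) and θ₂ > 1/(1 + ε). Consequently the set of interior initializations from which both gradients point toward the Stag equilibrium is exactly (1/(1+ε), 1) × (1/(1+ε), 1). -/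
/-- With `d > c`, `0 < ε < 1`, `a − b = ε(d − c)`, for interior
`(θ₁, θ₂) ∈ (0,1)²`, both policy-gradient directions point toward Stag
(derivatives of `θ ↦ u θ θ₂` at `θ₁` and of `θ ↦ u θ θ₁` at `θ₂` positive)
iff `θ₁ > 1/(1+ε)` and `θ₂ > 1/(1+ε)`; consequently the set of such interior
initializations is exactly `(1/(1+ε), 1) × (1/(1+ε), 1)`. -/
theorem stag_gradient_basin (a b c d ε : ℝ) (hdc : d > c) (hε0 : 0 < ε) (hε1 : ε < 1)
    (hab : a - b = ε * (d - c)) (u : ℝ → ℝ → ℝ)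
    (hu : ∀ θ₁ θ₂ : ℝ, u θ₁ θ₂ =
      a * θ₁ * θ₂ + c * θ₁ * (1 - θ₂) + b * (1 - θ₁) * θ₂ + d * (1 - θ₁) * (1 - θ₂)) :
    (∀ θ₁ ∈ Set.Ioo (0 : ℝ) 1, ∀ θ₂ ∈ Set.Ioo (0 : ℝ) 1,
      ((0 < deriv (fun θ => u θ θ₂) θ₁ ∧ 0 < deriv (fun θ => u θ θ₁) θ₂) ↔
        (θ₁ > 1 / (1 + ε) ∧ θ₂ > 1 / (1 + ε)))) ∧
    {p : ℝ × ℝ | p ∈ Set.Ioo (0 : ℝ) 1 ×ˢ Set.Ioo (0 : ℝ) 1 ∧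
        0 < deriv (fun θ => u θ p.2) p.1 ∧ 0 < deriv (fun θ => u θ p.1) p.2} =
      Set.Ioo (1 / (1 + ε)) 1 ×ˢ Set.Ioo (1 / (1 + ε)) 1 := by
  have hε : (0:ℝ) < 1 + ε := by linarith
  have hderiv : ∀ x y : ℝ, deriv (fun θ => u θ y) x = (d - c) * ((1 + ε) * y - 1) := by
    intro x y
    have hfun : (fun θ => u θ y)
        = fun θ => (a * y + c * (1 - y) - b * y - d * (1 - y)) * θ + (b * y + d * (1 - y)) := by
      funext θ; rw [hu]; ring
    have h1 : HasDerivAt (fun θ : ℝ => (a * y + c * (1 - y) - b * y - d * (1 - y)) * θ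
        + (b * y + d * (1 - y))) (a * y + c * (1 - y) - b * y - d * (1 - y)) x := by
      simpa using ((hasDerivAt_id x).const_mul
        (a * y + c * (1 - y) - b * y - d * (1 - y))).add_const (b * y + d * (1 - y))
    rw [hfun, h1.deriv]
    linear_combination y * hab
  have hpos : ∀ x y : ℝ, 0 < deriv (fun θ => u θ y) x ↔ y > 1 / (1 + ε) := by
    intro x y
    rw [hderiv]
    constructor
    · intro h
      have h2 : 0 < (1 + ε) * y - 1 := by
        by_contra hc
        push_neg at hc
        nlinarith
      rw [gt_iff_lt, div_lt_iff₀ hε]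
      linarith
    · intro h
      rw [gt_iff_lt, div_lt_iff₀ hε] at h
      have : 0 < (1 + ε) * y - 1 := by linarith [mul_comm y (1 + ε)]
      nlinarith
  have hlt1 : 1 / (1 + ε) < 1 := by
    rw [div_lt_one hε]; linarith
  have hgt0 : 0 < 1 / (1 + ε) := by positivity
  constructor
  · intro θ₁ _ θ₂ _
    rw [hpos, hpos]
    exact and_comm
  · ext p
    simp only [Set.mem_setOf_eq, Set.mem_prod, Set.mem_Ioo, hpos]
    constructor
    · rintro ⟨⟨⟨_, h1⟩, ⟨_, h2⟩⟩, hb, ha⟩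
      exact ⟨⟨ha, h1⟩, ⟨hb, h2⟩⟩
    · rintro ⟨⟨ha, h1⟩, ⟨hb, h2⟩⟩
      exact ⟨⟨⟨lt_trans hgt0 ha, h1⟩, ⟨lt_trans hgt0 hb, h2⟩⟩, hb, ha⟩
end

section
/- Consider the iterated prisoner's dilemma with stage payoffs: a cooperator gets 2 against a cooperator and −1 against a defector; a defector gets 3 against a cooperator and 0 against a defector. Suppose the opponent plays grim-trigger: its action at round n is Cooperate if and only if the player cooperated at every round m < n. For a player action sequence x : ℕ → Bool (true = Cooperate), let y : ℕ → Bool be the opponent's grim-trigger response (y n = true iff x m = true for all m < n), and define the stage payoff r n = 2 if x n ∧ y n, r n = −1 if x n ∧ ¬ y n, r n = 3 if ¬ x n ∧ y n, and r n = 0 if ¬ x n ∧ ¬ y n. Then for every discount factor γ with 1/3 ≤ γ < 1 and every x : ℕ → Bool, the discounted payoff ∑_{n=0}^∞ γⁿ · r n is at most 2/(1 − γ), and the all-cooperate sequence x ≡ true attains exactly 2/(1 − γ). Hence all-cooperate is a best response to grim-trigger whenever γ ≥ 1/3. -/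
/-- Against a grim-trigger opponent in the iterated prisoner's
dilemma (stage payoffs: CC → 2, CD → −1, DC → 3, DD → 0 for the player),
for any discount factor `γ` with `1/3 ≤ γ < 1`, every action sequence `x`
earns discounted payoff at most `2/(1 − γ)`, and the all-cooperate sequence
attains exactly `2/(1 − γ)`; hence all-cooperate is a best response to
grim-trigger whenever `γ ≥ 1/3`. -/
theorem grim_trigger_best_response (γ : ℝ) (hγ1 : 1 / 3 ≤ γ) (hγ2 : γ < 1) :
    (∀ x y : ℕ → Bool, ∀ r : ℕ → ℝ,
      (∀ n : ℕ, y n = true ↔ ∀ m < n, x m = true) →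
      (∀ n : ℕ, r n = if x n then (if y n then 2 else -1) else (if y n then 3 else 0)) →
      (∑' n : ℕ, γ ^ n * r n) ≤ 2 / (1 - γ)) ∧
    (∀ x y : ℕ → Bool, ∀ r : ℕ → ℝ,
      (∀ n : ℕ, x n = true) →
      (∀ n : ℕ, y n = true ↔ ∀ m < n, x m = true) →
      (∀ n : ℕ, r n = if x n then (if y n then 2 else -1) else (if y n then 3 else 0)) →
      (∑' n : ℕ, γ ^ n * r n) = 2 / (1 - γ)) := by
  have hγ0 : (0:ℝ) ≤ γ := le_trans (by norm_num) hγ1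
  have h1γ : (0:ℝ) < 1 - γ := by linarith
  have heq : ∀ x y : ℕ → Bool, ∀ r : ℕ → ℝ,
      (∀ n : ℕ, x n = true) →
      (∀ n : ℕ, y n = true ↔ ∀ m < n, x m = true) →
      (∀ n : ℕ, r n = if x n then (if y n then 2 else -1) else (if y n then 3 else 0)) →
      (∑' n : ℕ, γ ^ n * r n) = 2 / (1 - γ) := by
    intro x y r hx hy hr
    have hfun : (fun n => γ ^ n * r n) = fun n => 2 * γ ^ n := by
      funext n
      have hyn : y n = true := (hy n).2 (fun m _ => hx m)
      rw [hr n, hx n, hyn]; simp; ring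
    rw [hfun, tsum_mul_left, tsum_geometric_of_lt_one hγ0 hγ2]
    rw [div_eq_mul_inv]
  refine ⟨?_, heq⟩
  intro x y r hy hr
  by_cases hall : ∀ n, x n = true
  · exact le_of_eq (heq x y r hall hy hr)
  · push_neg at hall
    have hex : ∃ n, x n ≠ true := hall
    set N := Nat.find hex with hN
    have hxN : x N ≠ true := Nat.find_spec hex
    have hxlt : ∀ m < N, x m = true := fun m hm => by
      by_contra h; exact Nat.find_min hex hm h
    have hxN' : x N = false := by simpa using hxN
    have hyN : y N = true := (hy N).2 hxlt
    have hygt : ∀ n, N < n → y n = false := by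
      intro n hn
      by_contra h
      have h' : y n = true := by simpa using h
      exact hxN ((hy n).1 h' N hn)
    have hsum : Summable (fun n => γ ^ n * r n) := by
      apply Summable.of_norm
      apply Summable.of_nonneg_of_le (fun n => norm_nonneg _) (fun n => ?_)
        (Summable.mul_left 3 (summable_geometric_of_lt_one hγ0 hγ2))
      have hb : |r n| ≤ 3 := by
        rw [hr n]; split <;> split <;> norm_num
      calc ‖γ ^ n * r n‖ = γ ^ n * |r n| := by
            rw [norm_mul, Real.norm_eq_abs, Real.norm_eq_abs, abs_pow, abs_of_nonneg hγ0]
        _ ≤ γ ^ n * 3 := mul_le_mul_of_nonneg_left hb (pow_nonneg hγ0 n)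
        _ = 3 * γ ^ n := by ring
    rw [← Summable.sum_add_tsum_nat_add (N+1) hsum]
    have htail : (∑' n : ℕ, γ ^ (n + (N+1)) * r (n + (N+1))) ≤ 0 := by
      apply tsum_nonpos
      intro n
      have hyf : y (n + (N+1)) = false := hygt _ (by omega)
      have hrle : r (n + (N+1)) ≤ 0 := by
        rw [hr, hyf]; split <;> norm_num
      exact mul_nonpos_of_nonneg_of_nonpos (pow_nonneg hγ0 _) hrle
    have hfin : ∑ n ∈ Finset.range (N+1), γ ^ n * r n
        = (∑ n ∈ Finset.range N, 2 * γ ^ n) + 3 * γ ^ N := by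
      rw [Finset.sum_range_succ]
      congr 1
      · apply Finset.sum_congr rfl
        intro m hm
        have hm' := Finset.mem_range.1 hm
        have hym : y m = true := (hy m).2 (fun k hk => hxlt k (hk.trans hm'))
        rw [hr m, hxlt m hm', hym]; simp; ring
      · rw [hr N, hxN', hyN]; simp; ring
    have hgeo : ∑ n ∈ Finset.range N, (γ:ℝ) ^ n = (1 - γ ^ N)/(1 - γ) := by
      rw [geom_sum_eq (ne_of_lt hγ2)]
      rw [div_eq_div_iff (by linarith) (by linarith)]
      ring
    have hγN : (0:ℝ) ≤ γ ^ N := pow_nonneg hγ0 N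
    have key : γ ^ N ≤ 3 * γ * γ ^ N := by nlinarith
    have hmain : ∑ n ∈ Finset.range (N+1), γ ^ n * r n ≤ 2 / (1 - γ) := by
      rw [hfin, ← Finset.mul_sum, hgeo]
      have h2 : 2 * ((1 - γ ^ N)/(1 - γ)) + 3 * γ ^ N
          = (2 - 2 * γ ^ N + 3 * γ ^ N * (1 - γ))/(1 - γ) := by
        field_simp
      rw [h2, div_le_div_iff₀ h1γ h1γ]
      nlinarith
    linarith
end
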